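/- Let (p₁, q₁) and (p₂, q₂) be two distinct inverse edges in a minimum-weight spanning arborescence T (converging to root r) of the extended large tilt graph, such that the heads q₁ and q₂ lie in the same row segment R of the board. Then at most one of the tails p₁, p₂ lies in R. -/

import Mathlib

open Classical in
/-- The four tilt directions: right, left, up, down. -/
def dirs : Finset (ℤ × ℤ) := {(1, 0), (-1, 0), (0, 1), (0, -1)}

/-- `TiltEnd B p d q`: starting at pixel `p` of the board `B` and moving in
direction `d`, the particle comes to rest at `q`, i.e. `q = p^d` is the extreme
pixel of the maximal segment through `p` in direction `d`. -/
def TiltEnd (B : Finset (ℤ × ℤ)) (p d q : ℤ × ℤ) : Prop :=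
  (∃ n : ℕ, q = p + n • d ∧ ∀ m : ℕ, m ≤ n → p + m • d ∈ B) ∧ q + d ∉ B

/-- The full tilt graph of a board `B`: edges `(p, p^x)` for each direction. -/
def GF (B : Finset (ℤ × ℤ)) (p q : ℤ × ℤ) : Prop :=
  p ∈ B ∧ ∃ d ∈ dirs, TiltEnd B p d q

/-- `p` and `q` lie in a common (maximal horizontal) row segment of `B`. -/
def SameRow (B : Finset (ℤ × ℤ)) (p q : ℤ × ℤ) : Prop :=
  p ∈ B ∧ q ∈ B ∧ p.2 = q.2 ∧
    ∀ x : ℤ, min p.1 q.1 ≤ x → x ≤ max p.1 q.1 → (x, p.2) ∈ B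

/-- `p` and `q` lie in a common (maximal vertical) column segment of `B`. -/
def SameCol (B : Finset (ℤ × ℤ)) (p q : ℤ × ℤ) : Prop :=
  p ∈ B ∧ q ∈ B ∧ p.1 = q.1 ∧
    ∀ y : ℤ, min p.2 q.2 ≤ y → y ≤ max p.2 q.2 → (p.1, y) ∈ B

/-- `R` is an axis-aligned rectangle of pixels whose upper-right cell is `a`. -/
def IsRect (R : Set (ℤ × ℤ)) (a : ℤ × ℤ) : Prop :=
  ∃ x₁ y₁ : ℤ, x₁ ≤ a.1 ∧ y₁ ≤ a.2 ∧
    R = {v | x₁ ≤ v.1 ∧ v.1 ≤ a.1 ∧ y₁ ≤ v.2 ∧ v.2 ≤ a.2}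

/-- `a` is the anchor `p†` of `p`: `a` is the unique vertex of the large tilt
graph vertex set `VL` in a rectangle of pixels of `B` containing `p`, adjacent
on the inside to the rectangle's upper-right corner. -/
def IsAnchor (B : Finset (ℤ × ℤ)) (VL : Set (ℤ × ℤ)) (p a : ℤ × ℤ) : Prop :=
  a ∈ VL ∧ ∃ R : Set (ℤ × ℤ), IsRect R a ∧ R ⊆ ↑B ∧ p ∈ R ∧
    ∀ v ∈ R, v ∈ VL → v = a

/-- `VL` is a valid vertex set for the large tilt graph of board `B` with sinks
`S`: it consists of pixels, contains all sinks, is closed under tilt moves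
(so it contains the tilt images of sinks and the segment endpoints it needs),
and is closed under intersections of row and column segments through its
vertices. -/
structure LargeTiltSet (B : Finset (ℤ × ℤ)) (S VL : Set (ℤ × ℤ)) : Prop where
  subset : VL ⊆ ↑B
  sinks : S ⊆ VL
  tiltClosed : ∀ v ∈ VL, ∀ d ∈ dirs, ∀ q, TiltEnd B v d q → q ∈ VL
  interClosed : ∀ a ∈ VL, ∀ b ∈ VL, ∀ c, SameRow B a c → SameCol B b c → c ∈ VL

/-- The large tilt graph: the subgraph of the full tilt graph induced by `VL`. -/
def GLarge (B : Finset (ℤ × ℤ)) (VL : Set (ℤ × ℤ)) (p q : ℤ × ℤ) : Prop :=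
  p ∈ VL ∧ q ∈ VL ∧ GF B p q

/-- The extended graph of a graph `G` with sink set `S`, with fresh root
`none`: edges of `G`, inverse edges for missing reverses, and sink-to-root
edges. -/
def ExtR {α : Type*} (G : α → α → Prop) (S : Set α) : Option α → Option α → Prop
  | some p, some q => G p q ∨ (G q p ∧ ¬ G p q)
  | some s, none => s ∈ S
  | none, _ => False

open Classical in
/-- Weights in the extended graph: edges of `G` and sink-to-root edges have
weight 0, inverse edges have weight 1. -/
noncomputable def wR {α : Type*} (G : α → α → Prop) : α → Option α → ℕ
  | p, some q => if G p q then 0 else 1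
  | _, none => 0

/-- One step along the parent function `f`, the root `none` is absorbing. -/
def ostep {α : Type*} (f : α → Option α) : Option α → Option α
  | some v => f v
  | none => none

/-- `f` is a spanning arborescence on the vertex set `D` converging to the
root `none`: every vertex of `D` has its unique outgoing edge in `G` and
reaches the root. -/
def IsArbOn {α : Type*} (D : Finset α) (G : Option α → Option α → Prop)
    (f : α → Option α) : Prop :=
  (∀ v ∈ D, G (some v) (f v)) ∧ ∀ v ∈ D, ∃ n : ℕ, (ostep f)^[n] (some v) = none

/-- Total weight of an arborescence on vertex set `D`. -/
def weightOn {α : Type*} [DecidableEq α] (D : Finset α) (w : α → Option α → ℕ)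
    (f : α → Option α) : ℕ :=
  ∑ v ∈ D, w v (f v)

/-- Minimum-weight spanning arborescence on `D` converging to the root. -/
def IsMinArbOn {α : Type*} [DecidableEq α] (D : Finset α)
    (G : Option α → Option α → Prop) (w : α → Option α → ℕ) (f : α → Option α) : Prop :=
  IsArbOn D G f ∧ ∀ g : α → Option α, IsArbOn D G g → weightOn D w f ≤ weightOn D w g

/-!
An inverse edge `(p, q)` means that `q` tilts to `p`. When `p` and `q` lie in the same row
segment `R` this tilt is horizontal, so `p` is an end pixel of `R`. Two distinct tails in `R`
are therefore its two ends, joined in both directions by weight-0 tilt edges. Replacing the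
weight-1 edge out of `p₁` by the weight-0 edge `(p₁, p₂)` would give a lighter arborescence
unless the path from `p₂` to the root passes through `p₁`; symmetrically the path from `p₁`
passes through `p₂`, and these two paths form a cycle.
-/

open Function

section Arborescence

variable {α : Type*} {D : Finset α} {G : Option α → Option α → Prop} {f : α → Option α}

theorem IsArbOn.eq_of_iterate_eq_some (hf : IsArbOn D G f) {a b : α} (ha : a ∈ D) {m n : ℕ}
    (hab : (ostep f)^[m] (some a) = some b) (hba : (ostep f)^[n] (some b) = some a) :
    a = b := by
  rcases Nat.eq_zero_or_pos (n + m) with hzero | hpos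
  · obtain rfl : m = 0 := by omega
    exact Option.some_injective _ hab
  · have hcycle : IsPeriodicPt (ostep f) (n + m) (some a) := by
      rw [IsPeriodicPt, IsFixedPt, iterate_add_apply, hab, hba]
    obtain ⟨N, hN⟩ := hf.2 a ha
    have hroot : IsFixedPt (ostep f) none := rfl
    have := (hcycle.iterate N).eq_of_apply_eq_same ((hroot.isPeriodicPt _).iterate N) hpos
      (by rw [hN, iterate_fixed hroot])
    exact absurd this (Option.some_ne_none a)

theorem iterate_ostep_update_of_forall_ne [DecidableEq α] {p : α} {x u : Option α}
    (hu : ∀ n, (ostep f)^[n] u ≠ some p) (n : ℕ) :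
    (ostep (update f p x))^[n] u = (ostep f)^[n] u := by
  induction n with
  | zero => rfl
  | succ n ih =>
    rw [iterate_succ_apply', iterate_succ_apply', ih]
    cases hv : (ostep f)^[n] u with
    | none => rfl
    | some v => exact update_of_ne (fun hvp : v = p => hu n (hvp ▸ hv)) _ _

theorem IsArbOn.update_of_forall_ne [DecidableEq α] (hf : IsArbOn D G f) {p p' : α}
    (hp' : p' ∈ D) (hedge : G (some p) (some p'))
    (hpath : ∀ n, (ostep f)^[n] (some p') ≠ some p) :
    IsArbOn D G (update f p (some p')) := by
  set g := update f p (some p')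
  have hgp : g p = some p' := update_self _ _ _
  have hg : ∀ v, v ≠ p → g v = f v := fun v hv => update_of_ne hv _ _
  have hp_root : ∃ n, (ostep g)^[n] (some p) = none := by
    obtain ⟨n, hn⟩ := hf.2 p' hp'
    refine ⟨n + 1, ?_⟩
    rw [iterate_succ_apply, show ostep g (some p) = some p' from hgp,
      iterate_ostep_update_of_forall_ne hpath, hn]
  have hroot : ∀ n v, (ostep f)^[n] (some v) = none → ∃ m, (ostep g)^[m] (some v) = none := by
    intro n
    induction n with
    | zero => simp
    | succ n ih =>
      intro v hv
      by_cases hvp : v = p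
      · exact hvp ▸ hp_root
      rw [iterate_succ_apply, show ostep f (some v) = f v from rfl] at hv
      cases hfv : f v with
      | none => exact ⟨1, show g v = none by rw [hg v hvp, hfv]⟩
      | some u =>
        obtain ⟨m, hm⟩ := ih u (hfv ▸ hv)
        exact ⟨m + 1, by rw [iterate_succ_apply, show ostep g (some v) = some u by
          rw [← hfv]; exact hg v hvp]; exact hm⟩
  refine ⟨fun v hv => ?_, fun v hv => ?_⟩
  · by_cases hvp : v = p
    · subst hvp; rw [hgp]; exact hedge
    · rw [hg v hvp]; exact hf.1 v hv
  · obtain ⟨n, hn⟩ := hf.2 v hv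
    exact hroot n v hn

/-- Redirecting the edge out of `p` to a vertex `p'` whose path to the root avoids `p` keeps an
arborescence. -/
theorem IsMinArbOn.weight_le_of_not_reaches [DecidableEq α] {w : α → Option α → ℕ}
    (hmin : IsMinArbOn D G w f) {p p' : α} (hp : p ∈ D) (hp' : p' ∈ D)
    (hedge : G (some p) (some p')) (hpath : ∀ n, (ostep f)^[n] (some p') ≠ some p) :
    w p (f p) ≤ w p (some p') := by
  by_contra! hlt
  have hle := hmin.2 _ (hmin.1.update_of_forall_ne hp' hedge hpath)
  refine absurd hle (not_le.2 (Finset.sum_lt_sum (fun v _ => ?_) ⟨p, hp, ?_⟩))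
  · by_cases hvp : v = p
    · subst hvp; rw [update_self]; exact hlt.le
    · rw [update_of_ne hvp]
  · rwa [update_self]

end Arborescence

section Board

variable {B : Finset (ℤ × ℤ)} {p q r : ℤ × ℤ}

theorem SameRow.symm (h : SameRow B p q) : SameRow B q p := by
  obtain ⟨hp, hq, hy, hseg⟩ := h
  exact ⟨hq, hp, hy.symm, fun x h₁ h₂ => hy ▸ hseg x (by omega) (by omega)⟩

theorem SameRow.trans (hpq : SameRow B p q) (hqr : SameRow B q r) : SameRow B p r := by
  obtain ⟨hp, -, hy₁, hs₁⟩ := hpq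
  obtain ⟨-, hr, hy₂, hs₂⟩ := hqr
  refine ⟨hp, hr, hy₁.trans hy₂, fun x h₁ h₂ => ?_⟩
  rcases le_total x q.1 with hx | hx <;> rcases le_total p.1 r.1 with hpr | hpr <;>
    first
    | exact hs₁ x (by omega) (by omega)
    | exact hy₁ ▸ hs₂ x (by omega) (by omega)

theorem mem_dirs_of_horizontal {ε : ℤ} (hε : ε = 1 ∨ ε = -1) : (ε, 0) ∈ dirs := by
  rcases hε with rfl | rfl <;> simp [dirs]

theorem SameRow.tiltEnd {ε : ℤ} (h : SameRow B p q) (hε : ε = 1 ∨ ε = -1)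
    (hq : q + (ε, 0) ∉ B) : TiltEnd B p (ε, 0) q := by
  obtain ⟨-, -, hy, hseg⟩ := h
  have hq' : (q.1 + ε, p.2) ∉ B := by
    rw [hy]; convert hq using 2; ext <;> simp
  have hdir : 0 ≤ ε * (q.1 - p.1) := by
    by_contra! hneg
    refine hq' (hseg _ ?_ ?_) <;> rcases hε with rfl | rfl <;> omega
  refine ⟨⟨(ε * (q.1 - p.1)).toNat, ?_, fun m hm => ?_⟩, hq⟩
  · have := Int.toNat_of_nonneg hdir
    ext
    · rcases hε with rfl | rfl <;> simp <;> omega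
    · simp [hy]
  · have hm' : (m : ℤ) ≤ ε * (q.1 - p.1) := by omega
    have hpm : p + m • (ε, (0 : ℤ)) = (p.1 + m * ε, p.2) := by ext <;> simp
    rw [hpm]
    refine hseg _ ?_ ?_ <;> rcases hε with rfl | rfl <;> omega

theorem GF.exists_add_notMem_of_snd_eq (h : GF B q p) (hy : p.2 = q.2) (hne : p ≠ q) :
    ∃ ε : ℤ, (ε = 1 ∨ ε = -1) ∧ p + (ε, 0) ∉ B := by
  obtain ⟨-, d, hd, ⟨n, rfl, -⟩, hout⟩ := h
  simp only [dirs, Finset.mem_insert, Finset.mem_singleton] at hd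
  rcases hd with rfl | rfl | rfl | rfl
  · exact ⟨1, Or.inl rfl, hout⟩
  · exact ⟨-1, Or.inr rfl, hout⟩
  all_goals
    obtain rfl : n = 0 := by simp at hy; omega
    simp at hne

end Board

theorem stmt10_general (B S VL : Finset (ℤ × ℤ))
    (f : ℤ × ℤ → Option (ℤ × ℤ))
    (hmin : IsMinArbOn VL (ExtR (GLarge B ↑VL) ↑S) (wR (GLarge B ↑VL)) f)
    (p₁ q₁ p₂ q₂ : ℤ × ℤ) (hp₁ : p₁ ∈ VL) (hp₂ : p₂ ∈ VL)
    (he₁ : f p₁ = some q₁) (he₂ : f p₂ = some q₂)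
    (hinv₁ : GLarge B ↑VL q₁ p₁ ∧ ¬ GLarge B ↑VL p₁ q₁)
    (hinv₂ : GLarge B ↑VL q₂ p₂ ∧ ¬ GLarge B ↑VL p₂ q₂)
    (hne : (p₁, q₁) ≠ (p₂, q₂))
    (hrow : SameRow B q₁ q₂) :
    ¬ (SameRow B p₁ q₁ ∧ SameRow B p₂ q₁) := by
  rintro ⟨h₁, h₂⟩
  have h₂' : SameRow B p₂ q₂ := h₂.trans hrow
  obtain ⟨ε₁, hε₁, hend₁⟩ := hinv₁.1.2.2.exists_add_notMem_of_snd_eq h₁.2.2.1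
    (fun h => hinv₁.2 (h ▸ hinv₁.1))
  obtain ⟨ε₂, hε₂, hend₂⟩ := hinv₂.1.2.2.exists_add_notMem_of_snd_eq h₂'.2.2.1
    (fun h => hinv₂.2 (h ▸ hinv₂.1))
  have h₁₂ : SameRow B p₁ p₂ := h₁.trans h₂.symm
  have hG₁₂ : GLarge B VL p₁ p₂ :=
    ⟨hp₁, hp₂, h₁.1, _, mem_dirs_of_horizontal hε₂, h₁₂.tiltEnd hε₂ hend₂⟩
  have hG₂₁ : GLarge B VL p₂ p₁ :=
    ⟨hp₂, hp₁, h₂.1, _, mem_dirs_of_horizontal hε₁, h₁₂.symm.tiltEnd hε₁ hend₁⟩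
  have hreach₁ : ∃ n, (ostep f)^[n] (some p₂) = some p₁ := by
    by_contra! h
    simpa [wR, he₁, hinv₁.2, hG₁₂] using
      hmin.weight_le_of_not_reaches hp₁ hp₂ (Or.inl hG₁₂) h
  have hreach₂ : ∃ n, (ostep f)^[n] (some p₁) = some p₂ := by
    by_contra! h
    simpa [wR, he₂, hinv₂.2, hG₂₁] using
      hmin.weight_le_of_not_reaches hp₂ hp₁ (Or.inl hG₂₁) h
  obtain ⟨m, hm⟩ := hreach₂
  obtain ⟨n, hn⟩ := hreach₁
  obtain rfl := hmin.1.eq_of_iterate_eq_some hp₁ hm hn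
  exact hne (by rw [Option.some_injective _ (he₁.symm.trans he₂)])

/-- For two distinct inverse edges `(p₁, q₁)` and `(p₂, q₂)` in a
minimum-weight arborescence of the extended large tilt graph with heads `q₁`,
`q₂` in a common row segment `R`, at most one of the tails `p₁`, `p₂` lies
in `R`. -/
theorem stmt10 (B S VL : Finset (ℤ × ℤ))
    (hVL : LargeTiltSet B ↑S ↑VL)
    (f : ℤ × ℤ → Option (ℤ × ℤ))
    (hmin : IsMinArbOn VL (ExtR (GLarge B ↑VL) ↑S) (wR (GLarge B ↑VL)) f)
    (p₁ q₁ p₂ q₂ : ℤ × ℤ) (hp₁ : p₁ ∈ VL) (hp₂ : p₂ ∈ VL)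
    (he₁ : f p₁ = some q₁) (he₂ : f p₂ = some q₂)
    (hinv₁ : GLarge B ↑VL q₁ p₁ ∧ ¬ GLarge B ↑VL p₁ q₁)
    (hinv₂ : GLarge B ↑VL q₂ p₂ ∧ ¬ GLarge B ↑VL p₂ q₂)
    (hne : (p₁, q₁) ≠ (p₂, q₂))
    (hrow : SameRow B q₁ q₂) :
    ¬ (SameRow B p₁ q₁ ∧ SameRow B p₂ q₁) :=
  stmt10_general B S VL f hmin p₁ q₁ p₂ q₂ hp₁ hp₂ he₁ he₂ hinv₁ hinv₂ hne hrow
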